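/- Let L, M, N be positive integers and let g_0, …, g_{L−1} ∈ ℓ²(ℤ²,ℍ). If the Gabor system G(g,L,M,N) is a Parseval frame for ℓ²(ℤ²,ℍ), then N² ≤ L·M². -/

import Mathlib

noncomputable section

open scoped Real

/-- The real quaternions. -/
abbrev ℍ : Type := Quaternion ℝ

/-- `e_i θ = cos θ + (sin θ) i`. -/
def eI (θ : ℝ) : ℍ := ⟨Real.cos θ, Real.sin θ, 0, 0⟩

/-- `e_j θ = cos θ + (sin θ) j`. -/
def eJ (θ : ℝ) : ℍ := ⟨Real.cos θ, 0, Real.sin θ, 0⟩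

/-- Quaternionic pairing `⟨f,g⟩ = ∑ conj (f k) * g k`. -/
def qpair (f g : ℤ × ℤ → ℍ) : ℍ := ∑' k : ℤ × ℤ, star (f k) * g k

/-- Membership in `ℓ²(ℤ², ℍ)`. -/
def MemL2 (f : ℤ × ℤ → ℍ) : Prop := Summable fun k : ℤ × ℤ => ‖f k‖ ^ 2

/-- `‖f‖² = ∑ |f k|²`. -/
def normSq2 (f : ℤ × ℤ → ℍ) : ℝ := ∑' k : ℤ × ℤ, ‖f k‖ ^ 2

/-- A window is real-valued if all its values lie in `ℝ ⊆ ℍ`. -/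
def IsRealValued (f : ℤ × ℤ → ℍ) : Prop := ∀ k : ℤ × ℤ, f k = ((f k).re : ℍ)

/-- The Gabor atom `E_{m/M} T_{nN} w`. -/
def gaborAtom (M N : ℕ) (w : ℤ × ℤ → ℍ) (m : ℕ × ℕ) (n : ℤ × ℤ) : ℤ × ℤ → ℍ :=
  fun k =>
    eI (2 * π * (m.1 : ℝ) * (k.1 : ℝ) / (M : ℝ)) *
      w (k.1 - n.1 * (N : ℤ), k.2 - n.2 * (N : ℤ)) *
      eJ (2 * π * (m.2 : ℝ) * (k.2 : ℝ) / (M : ℝ))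

/-- The index square `{0, …, M-1}²`. -/
abbrev msq (M : ℕ) : Finset (ℕ × ℕ) := Finset.range M ×ˢ Finset.range M

/-- `k ∈ {0, …, N-1}²` inside `ℤ²`. -/
def InNsq (N : ℕ) (k : ℤ × ℤ) : Prop :=
  0 ≤ k.1 ∧ k.1 < (N : ℤ) ∧ 0 ≤ k.2 ∧ k.2 < (N : ℤ)

/-- `∑_{l<L} ∑_{n∈ℤ²} ∑_{m∈{0,…,M-1}²} |⟨E_{m/M}T_{nN}g_l, h⟩|²`. -/
def frameSum (L M N : ℕ) (g : ℕ → ℤ × ℤ → ℍ) (h : ℤ × ℤ → ℍ) : ℝ :=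
  ∑ l ∈ Finset.range L, ∑' n : ℤ × ℤ, ∑ m ∈ msq M,
    ‖qpair (gaborAtom M N (g l) m n) h‖ ^ 2

/-- Bessel system with bound `B`. -/
def IsBessel (L M N : ℕ) (g : ℕ → ℤ × ℤ → ℍ) (B : ℝ) : Prop :=
  ∀ h : ℤ × ℤ → ℍ, MemL2 h → frameSum L M N g h ≤ B * normSq2 h

/-- Frame with bounds `A ≤ B`. -/
def IsFrame (L M N : ℕ) (g : ℕ → ℤ × ℤ → ℍ) (A B : ℝ) : Prop :=
  ∀ h : ℤ × ℤ → ℍ, MemL2 h →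
    A * normSq2 h ≤ frameSum L M N g h ∧ frameSum L M N g h ≤ B * normSq2 h

/-- Parseval frame. -/
def IsParseval (L M N : ℕ) (g : ℕ → ℤ × ℤ → ℍ) : Prop :=
  ∀ h : ℤ × ℤ → ℍ, MemL2 h → frameSum L M N g h = normSq2 h

/-- Orthonormal system. -/
def IsON (L M N : ℕ) (g : ℕ → ℤ × ℤ → ℍ) : Prop :=
  ∀ l l' : ℕ, l < L → l' < L → ∀ m ∈ msq M, ∀ m' ∈ msq M, ∀ n n' : ℤ × ℤ,
    qpair (gaborAtom M N (g l) m n) (gaborAtom M N (g l') m' n') =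
      if l = l' ∧ m = m' ∧ n = n' then 1 else 0

/-- `G(k,p) = ∑_{l<L} ∑_{n∈ℤ²} g_l(k-nN) g_l(k+pM-nN)`. -/
def gaborG (L M N : ℕ) (g : ℕ → ℤ × ℤ → ℍ) (k p : ℤ × ℤ) : ℍ :=
  ∑ l ∈ Finset.range L, ∑' n : ℤ × ℤ,
    g l (k.1 - n.1 * (N : ℤ), k.2 - n.2 * (N : ℤ)) *
      g l (k.1 + p.1 * (M : ℤ) - n.1 * (N : ℤ), k.2 + p.2 * (M : ℤ) - n.2 * (N : ℤ))

/-- Mixed version: `∑_{l<L} ∑_{n∈ℤ²} g_l(k-nN) h_l(k+pM-nN)`. -/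
def gaborGmix (L M N : ℕ) (g h : ℕ → ℤ × ℤ → ℍ) (k p : ℤ × ℤ) : ℍ :=
  ∑ l ∈ Finset.range L, ∑' n : ℤ × ℤ,
    g l (k.1 - n.1 * (N : ℤ), k.2 - n.2 * (N : ℤ)) *
      h l (k.1 + p.1 * (M : ℤ) - n.1 * (N : ℤ), k.2 + p.2 * (M : ℤ) - n.2 * (N : ℤ))

/-- `∑_{l<L} ∑_{n∈ℤ²} |g_l(k-nN)|²`. -/
def winSum (L N : ℕ) (g : ℕ → ℤ × ℤ → ℍ) (k : ℤ × ℤ) : ℝ :=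
  ∑ l ∈ Finset.range L, ∑' n : ℤ × ℤ,
    ‖g l (k.1 - n.1 * (N : ℤ), k.2 - n.2 * (N : ℤ))‖ ^ 2

/-- Support of diameter `< M` in every row and every column. -/
def DiamLt (M : ℕ) (f : ℤ × ℤ → ℍ) : Prop :=
  (∀ k₂ k₁ k₁' : ℤ, f (k₁, k₂) ≠ 0 → f (k₁', k₂) ≠ 0 → |k₁ - k₁'| < (M : ℤ)) ∧
  (∀ k₁ k₂ k₂' : ℤ, f (k₁, k₂) ≠ 0 → f (k₁, k₂') ≠ 0 → |k₂ - k₂'| < (M : ℤ))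

/-- `M`-periodicity. -/
def MPeriodic (M : ℕ) (f : ℤ × ℤ → ℍ) : Prop :=
  ∀ k : ℤ × ℤ, f (k.1 + (M : ℤ), k.2) = f k ∧ f (k.1, k.2 + (M : ℤ)) = f k

/-- Duality of two Gabor systems (on finitely supported sequences). -/
def AreDual (L M N : ℕ) (g h : ℕ → ℤ × ℤ → ℍ) : Prop :=
  ∀ f φ : ℤ × ℤ → ℍ, (Function.support f).Finite → (Function.support φ).Finite →
    (∑ l ∈ Finset.range L, ∑' n : ℤ × ℤ, ∑ m ∈ msq M,
      qpair f (gaborAtom M N (g l) m n) * qpair (gaborAtom M N (h l) m n) φ)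
      = qpair f φ

/-! Testing the Parseval identity on the unit impulse at `κ` gives
`M² ∑_l ∑_n |g_l(κ - nN)|² = 1`; summing over `κ` in the fundamental domain `{0,…,N-1}²` of `Nℤ²`
yields `N² = M² ∑_l ‖g_l‖²`. Testing it on `g_l` itself gives `‖g_l‖⁴ = |⟨g_l, g_l⟩|² ≤ ‖g_l‖²`,
so `‖g_l‖² ≤ 1` and hence `N² ≤ L M²`. The second test is run on the finite truncations of `g_l`:
for finitely supported `h` every layer of the frame sum is visibly summable, whereas otherwise its
`tsum` could be the junk value `0`. -/

lemma norm_eI (θ : ℝ) : ‖eI θ‖ = 1 := by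
  rw [norm_eq_sqrt_real_inner, Quaternion.inner_self, Quaternion.normSq_def']
  simp [eI]

lemma norm_eJ (θ : ℝ) : ‖eJ θ‖ = 1 := by
  rw [norm_eq_sqrt_real_inner, Quaternion.inner_self, Quaternion.normSq_def']
  simp [eJ]

lemma eI_zero : eI 0 = 1 := by
  ext <;> simp [eI] <;> rfl

lemma eJ_zero : eJ 0 = 1 := by
  ext <;> simp [eJ] <;> rfl

lemma norm_gaborAtom (M N : ℕ) (w : ℤ × ℤ → ℍ) (m : ℕ × ℕ) (n k : ℤ × ℤ) :
    ‖gaborAtom M N w m n k‖ = ‖w (k.1 - n.1 * N, k.2 - n.2 * N)‖ := by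
  simp [gaborAtom, norm_eI, norm_eJ]

lemma gaborAtom_zero (M N : ℕ) (w : ℤ × ℤ → ℍ) : gaborAtom M N w 0 0 = w := by
  funext k
  simp [gaborAtom, eI_zero, eJ_zero]

lemma MemL2.summable_translate {N : ℕ} (hN : 0 < N) {w : ℤ × ℤ → ℍ} (hw : MemL2 w)
    (κ : ℤ × ℤ) : Summable fun n : ℤ × ℤ => ‖w (κ.1 - n.1 * N, κ.2 - n.2 * N)‖ ^ 2 := by
  refine hw.comp_injective fun a b hab => ?_
  simp only [Prod.mk.injEq, sub_right_inj] at hab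
  have hN' : (N : ℤ) ≠ 0 := by exact_mod_cast hN.ne'
  exact Prod.ext (mul_right_cancel₀ hN' hab.1) (mul_right_cancel₀ hN' hab.2)

lemma memL2_single (κ : ℤ × ℤ) : MemL2 (Pi.single κ 1) :=
  summable_of_ne_finset_zero (s := {κ}) fun k hk => by
    simp [Pi.single_eq_of_ne (Finset.notMem_singleton.1 hk)]

lemma normSq2_single (κ : ℤ × ℤ) : normSq2 (Pi.single κ 1) = 1 := by
  rw [normSq2, tsum_eq_single κ fun k hk => by simp [Pi.single_eq_of_ne hk]]
  simp

lemma qpair_single (f : ℤ × ℤ → ℍ) (κ : ℤ × ℤ) : qpair f (Pi.single κ 1) = star (f κ) := by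
  rw [qpair, tsum_eq_single κ fun k hk => by simp [Pi.single_eq_of_ne hk]]
  simp

lemma frameSum_single (L M N : ℕ) (g : ℕ → ℤ × ℤ → ℍ) (κ : ℤ × ℤ) :
    frameSum L M N g (Pi.single κ 1) = (M : ℝ) ^ 2 * winSum L N g κ := by
  simp only [frameSum, winSum, qpair_single, norm_star, norm_gaborAtom, Finset.sum_const,
    Finset.card_product, Finset.card_range, nsmul_eq_mul, Finset.mul_sum, tsum_mul_left]
  push_cast [sq]
  rfl

lemma sum_tsum_norm_sq_translate_eq_normSq2 {N : ℕ} [NeZero N] {w : ℤ × ℤ → ℍ} (hw : MemL2 w) :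
    ∑ κ : Fin N × Fin N, ∑' n : ℤ × ℤ, ‖w (κ.1 - n.1 * N, κ.2 - n.2 * N)‖ ^ 2 = normSq2 w := by
  let d : Fin N × ℤ ≃ ℤ := (Equiv.prodComm _ _).trans
    (((Equiv.neg ℤ).prodCongr (Equiv.refl _)).trans (Int.divModEquiv N).symm)
  let e : (Fin N × Fin N) × (ℤ × ℤ) ≃ ℤ × ℤ :=
    (Equiv.prodProdProdComm _ _ _ _).trans (d.prodCongr d)
  have he : ∀ κ n, e (κ, n) = ((κ.1 : ℤ) - n.1 * N, (κ.2 : ℤ) - n.2 * N) := fun κ n => by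
    simp [e, d, sub_eq_neg_add]
  have hsum : Summable fun p => ‖w (e p)‖ ^ 2 := hw.comp_injective e.injective
  rw [normSq2, ← e.tsum_eq, hsum.tsum_prod' hsum.prod_factor, tsum_fintype]
  simp only [he]

lemma sum_winSum_eq_sum_normSq2 {L N : ℕ} [NeZero N] {g : ℕ → ℤ × ℤ → ℍ}
    (hg : ∀ l < L, MemL2 (g l)) :
    ∑ κ : Fin N × Fin N, winSum L N g (κ.1, κ.2) = ∑ l ∈ Finset.range L, normSq2 (g l) := by
  simp only [winSum]
  rw [Finset.sum_comm]
  exact Finset.sum_congr rfl fun l hl =>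
    sum_tsum_norm_sq_translate_eq_normSq2 (hg l (Finset.mem_range.1 hl))

section FiniteSupport

variable {h : ℤ × ℤ → ℍ} {F : Finset (ℤ × ℤ)}

lemma memL2_of_ne_finset_zero (hF : ∀ k ∉ F, h k = 0) : MemL2 h :=
  summable_of_ne_finset_zero (s := F) fun k hk => by simp [hF k hk]

lemma normSq2_eq_finset_sum (hF : ∀ k ∉ F, h k = 0) : normSq2 h = ∑ k ∈ F, ‖h k‖ ^ 2 :=
  tsum_eq_sum fun k hk => by simp [hF k hk]

lemma qpair_eq_finset_sum (w : ℤ × ℤ → ℍ) (hF : ∀ k ∉ F, h k = 0) :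
    qpair w h = ∑ k ∈ F, star (w k) * h k :=
  tsum_eq_sum fun k hk => by simp [hF k hk]

lemma norm_qpair_gaborAtom_sq_le (M N : ℕ) (w : ℤ × ℤ → ℍ) (m : ℕ × ℕ) (n : ℤ × ℤ)
    (hF : ∀ k ∉ F, h k = 0) :
    ‖qpair (gaborAtom M N w m n) h‖ ^ 2 ≤
      (∑ k ∈ F, ‖w (k.1 - n.1 * N, k.2 - n.2 * N)‖ ^ 2) * ∑ k ∈ F, ‖h k‖ ^ 2 := by
  have hle : ‖qpair (gaborAtom M N w m n) h‖ ≤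
      ∑ k ∈ F, ‖w (k.1 - n.1 * N, k.2 - n.2 * N)‖ * ‖h k‖ := by
    rw [qpair_eq_finset_sum _ hF]
    refine (norm_sum_le _ _).trans_eq (Finset.sum_congr rfl fun k _ => ?_)
    rw [norm_mul, norm_star, norm_gaborAtom]
  exact (pow_le_pow_left₀ (norm_nonneg _) hle 2).trans (Finset.sum_mul_sq_le_sq_mul_sq F _ _)

lemma summable_gaborLayer {M N : ℕ} (hN : 0 < N) {w : ℤ × ℤ → ℍ} (hw : MemL2 w)
    (hF : ∀ k ∉ F, h k = 0) :
    Summable fun n : ℤ × ℤ => ∑ m ∈ msq M, ‖qpair (gaborAtom M N w m n) h‖ ^ 2 := by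
  refine Summable.of_nonneg_of_le (fun n => by positivity)
    (fun n => Finset.sum_le_sum fun m _ => norm_qpair_gaborAtom_sq_le M N w m n hF) ?_
  simp only [Finset.sum_const, nsmul_eq_mul]
  exact ((summable_sum fun k _ => hw.summable_translate hN k).mul_right _).mul_left _

lemma norm_qpair_sq_le_frameSum {L M N : ℕ} (hM : 0 < M) (hN : 0 < N) {g : ℕ → ℤ × ℤ → ℍ}
    {l : ℕ} (hl : l < L) (hgl : MemL2 (g l)) (hF : ∀ k ∉ F, h k = 0) :
    ‖qpair (g l) h‖ ^ 2 ≤ frameSum L M N g h := by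
  have hm : ((0, 0) : ℕ × ℕ) ∈ msq M := by simp [hM]
  calc ‖qpair (g l) h‖ ^ 2 = ‖qpair (gaborAtom M N (g l) 0 0) h‖ ^ 2 := by
        rw [gaborAtom_zero]
    _ ≤ ∑ m ∈ msq M, ‖qpair (gaborAtom M N (g l) m 0) h‖ ^ 2 :=
        Finset.single_le_sum (f := fun m => ‖qpair (gaborAtom M N (g l) m 0) h‖ ^ 2)
          (fun _ _ => by positivity) hm
    _ ≤ ∑' n : ℤ × ℤ, ∑ m ∈ msq M, ‖qpair (gaborAtom M N (g l) m n) h‖ ^ 2 :=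
        (summable_gaborLayer hN hgl hF).le_tsum 0 fun _ _ => by positivity
    _ ≤ frameSum L M N g h :=
        Finset.single_le_sum
          (f := fun l => ∑' n : ℤ × ℤ, ∑ m ∈ msq M, ‖qpair (gaborAtom M N (g l) m n) h‖ ^ 2)
          (fun _ _ => tsum_nonneg fun _ => by positivity) (Finset.mem_range.2 hl)

end FiniteSupport

lemma normSq2_le_one_of_isParseval {L M N : ℕ} (hM : 0 < M) (hN : 0 < N) {g : ℕ → ℤ × ℤ → ℍ}
    (hpar : IsParseval L M N g) {l : ℕ} (hl : l < L) (hgl : MemL2 (g l)) :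
    normSq2 (g l) ≤ 1 := by
  refine hgl.tsum_le_of_sum_le fun F => ?_
  set s : ℝ := ∑ k ∈ F, ‖g l k‖ ^ 2
  set h := (F : Set (ℤ × ℤ)).indicator (g l)
  have hF : ∀ k ∉ F, h k = 0 := fun k hk => Set.indicator_of_notMem (by simpa) _
  have hh : ∀ k ∈ F, h k = g l k := fun k hk => Set.indicator_of_mem (by simpa) _
  have hpair : qpair (g l) h = (s : ℍ) := by
    rw [qpair_eq_finset_sum _ hF, ← Quaternion.algebraMap_def, map_sum]
    refine Finset.sum_congr rfl fun k hk => ?_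
    rw [hh k hk, Quaternion.star_mul_self, Quaternion.normSq_eq_norm_mul_self, sq,
      Quaternion.algebraMap_def]
  have hnorm : normSq2 h = s := by
    rw [normSq2_eq_finset_sum hF]
    exact Finset.sum_congr rfl fun k hk => by rw [hh k hk]
  have hs : s ^ 2 ≤ s := by
    have := norm_qpair_sq_le_frameSum hM hN hl hgl hF
    rwa [hpar h (memL2_of_ne_finset_zero hF), hnorm, hpair, Quaternion.norm_coe, Real.norm_eq_abs,
      sq_abs] at this
  nlinarith [show 0 ≤ s by positivity]

theorem stmt_1_general (L M N : ℕ) (hM : 0 < M) (hN : 0 < N)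
    (g : ℕ → ℤ × ℤ → ℍ) (hg : ∀ l < L, MemL2 (g l))
    (hpar : IsParseval L M N g) :
    N ^ 2 ≤ L * M ^ 2 := by
  have : NeZero N := ⟨hN.ne'⟩
  have hwin : ∀ κ, (M : ℝ) ^ 2 * winSum L N g κ = 1 := fun κ => by
    rw [← frameSum_single, hpar _ (memL2_single κ), normSq2_single]
  have hN2 : (N : ℝ) ^ 2 = M ^ 2 * ∑ l ∈ Finset.range L, normSq2 (g l) := by
    rw [← sum_winSum_eq_sum_normSq2 (N := N) hg, Finset.mul_sum]
    simp only [hwin, Finset.sum_const, Finset.card_univ, Fintype.card_prod, Fintype.card_fin,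
      nsmul_eq_mul, Nat.cast_mul, mul_one]
    ring
  have hsum : ∑ l ∈ Finset.range L, normSq2 (g l) ≤ L := by
    calc ∑ l ∈ Finset.range L, normSq2 (g l) ≤ ∑ _l ∈ Finset.range L, (1 : ℝ) :=
          Finset.sum_le_sum fun l hl => normSq2_le_one_of_isParseval hM hN hpar
            (Finset.mem_range.1 hl) (hg l (Finset.mem_range.1 hl))
      _ = L := by simp
  have : (N : ℝ) ^ 2 ≤ L * M ^ 2 :=
    calc (N : ℝ) ^ 2 = M ^ 2 * ∑ l ∈ Finset.range L, normSq2 (g l) := hN2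
      _ ≤ M ^ 2 * L := by gcongr
      _ = L * M ^ 2 := mul_comm _ _
  exact_mod_cast this

/-- a Parseval quaternionic Gabor frame forces `N² ≤ L M²`. -/
theorem stmt_1 (L M N : ℕ) (hL : 0 < L) (hM : 0 < M) (hN : 0 < N)
    (g : ℕ → ℤ × ℤ → ℍ) (hg : ∀ l < L, MemL2 (g l))
    (hpar : IsParseval L M N g) :
    N ^ 2 ≤ L * M ^ 2 :=
  stmt_1_general L M N hM hN g hg hpar
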